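/- arXiv:2405.06069 — 2 statements merged into one kernel-verified Lean document; each statement's English description precedes it below -/
import Mathlib

section
/- Corollary: Let n ≥ 4 and 2 ≤ k ≤ n-2. If the kth compound C_k(A) of an n-by-n real matrix A is TP_3, then A is not TP_{k+2}. -/
open Matrix

open Matrix

/-- `A` is totally positive: every minor (with strictly increasing row and
column index selections) is positive. -/
def IsTP {α β : Type} [LinearOrder α] [LinearOrder β] (A : Matrix α β ℝ) : Prop :=
  ∀ (l : ℕ) (r : Fin l → α) (c : Fin l → β), StrictMono r → StrictMono c →
    0 < (A.submatrix r c).det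

/-- `A` is `TP_k`: every minor of order at most `k` is positive. -/
def IsTPk {α β : Type} [LinearOrder α] [LinearOrder β] (A : Matrix α β ℝ) (k : ℕ) : Prop :=
  ∀ (l : ℕ), l ≤ k → ∀ (r : Fin l → α) (c : Fin l → β), StrictMono r → StrictMono c →
    0 < (A.submatrix r c).det

/-- `k`-subsets of `{1,…,n}`, encoded as strictly increasing tuples. -/
abbrev STuple (n k : ℕ) : Type := {f : Fin k → Fin n // StrictMono f}

noncomputable instance lexPi {n k : ℕ} : LinearOrder (Lex (Fin k → Fin n)) :=
  @Pi.Lex.linearOrder (Fin k) (fun _ => Fin n) _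
    Finite.to_wellFoundedLT _

/-- The lexicographic linear order on `k`-subsets. -/
noncomputable instance {n k : ℕ} : LinearOrder (STuple n k) :=
  LinearOrder.lift' (fun s => toLex s.1) (fun _ _ h => Subtype.ext (congrArg ofLex h))

/-- The `k`-th compound matrix of `A`: the matrix of all `k×k` minors of `A`,
rows and columns indexed by `k`-subsets ordered lexicographically. -/
noncomputable def compound {n : ℕ} (A : Matrix (Fin n) (Fin n) ℝ) (k : ℕ) :
    Matrix (STuple n k) (STuple n k) ℝ :=
  fun s t => (A.submatrix s.1 t.1).det

/-- The `k`-th Dodgson condensation matrix of `A`: the `(n-k) × (n-k)` matrix of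
contiguous minors of order `k+1` (0-indexed positions). -/
noncomputable def Dmat {n : ℕ} (A : Matrix (Fin n) (Fin n) ℝ) (k : ℕ) :
    Matrix (Fin (n - k)) (Fin (n - k)) ℝ :=
  fun i j =>
    (A.submatrix
      (fun p : Fin (k + 1) => (⟨i.1 + p.1, by have := i.2; have := p.2; omega⟩ : Fin n))
      (fun p : Fin (k + 1) => (⟨j.1 + p.1, by have := j.2; have := p.2; omega⟩ : Fin n))).det

/-- The contiguous minor of `A` of order `sz` with top-left position `(i, j)`
(0-indexed): `det A[{i,…,i+sz-1},{j,…,j+sz-1}]`. -/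
noncomputable def cminor {n : ℕ} (A : Matrix (Fin n) (Fin n) ℝ) (sz i j : ℕ)
    (hi : i + sz ≤ n) (hj : j + sz ≤ n) : ℝ :=
  (A.submatrix (fun p : Fin sz => (⟨i + p.1, by have := p.2; omega⟩ : Fin n))
               (fun p : Fin sz => (⟨j + p.1, by have := p.2; omega⟩ : Fin n))).det

/-!
Write `k = s + 2`, let `E = {0, …, s-1}` and `W = {s, …, s+3}`, and let `G` be the `4 × 4`
Schur complement of `A[E, E]` in `A[E ∪ W, E ∪ W]`. By the Schur determinant formula every minor
of `A` with rows `E ∪ W[r]` and columns `E ∪ W[c]` is `det A[E, E] · det G[r, c]`, so if `A` is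
`TP_{k+2}` then `G` is `TP_4`. The same formula writes the `3 × 3` minor of `C_k(A)` with rows
`E ∪ W[{0,1}], E ∪ W[{0,2}], E ∪ W[{0,3}]` and columns `E ∪ W[{0,1}], E ∪ W[{0,3}], E ∪ W[{1,2}]`
(both lexicographically increasing) as `(det A[E, E])³ · (-G₀₀ G₀₁ det G) < 0`, so `C_k(A)` is not
`TP_3`.
-/

lemma Fin.strictMono_append {α : Type*} [Preorder α] {s l : ℕ} {e : Fin s → α} {u : Fin l → α}
    (he : StrictMono e) (hu : StrictMono u) (heu : ∀ i j, e i < u j) :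
    StrictMono (Fin.append e u) := by
  intro a b hab
  cases a using Fin.addCases <;> cases b using Fin.addCases <;>
    simp only [Fin.append_left, Fin.append_right]
  · exact he ((Fin.strictMono_castAdd l).lt_iff_lt.1 hab)
  · exact heu _ _
  · exact absurd hab (by simp only [Fin.lt_def, Fin.val_natAdd, Fin.val_castAdd]; omega)
  · exact hu ((Fin.strictMono_natAdd s).lt_iff_lt.1 hab)

lemma Pi.toLex_append_lt_append {α : Type*} [LT α] {s l : ℕ} (e : Fin s → α)
    {x y : Fin l → α} (h : toLex x < toLex y) :
    toLex (Fin.append e x) < toLex (Fin.append e y) := by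
  obtain ⟨i, hfix, hi⟩ := h
  refine ⟨Fin.natAdd s i, fun j hj => ?_, by simpa using hi⟩
  cases j using Fin.addCases with
  | left j => simp
  | right j => simpa using hfix j ((Fin.strictMono_natAdd s).lt_iff_lt.1 hj)

lemma Pi.toLex_comp_lt_comp {ι α β : Type*} [LT ι] [Preorder α] [Preorder β] {w : α → β}
    (hw : StrictMono w) {x y : ι → α} (h : toLex x < toLex y) :
    toLex (w ∘ x) < toLex (w ∘ y) := by
  obtain ⟨i, hfix, hi⟩ := h
  exact ⟨i, fun j hj => congrArg w (hfix j hj), hw hi⟩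

lemma Pi.toLex_lt_of_fin_two {α : Type*} [LT α] {x y : Fin 2 → α}
    (h : x 0 < y 0 ∨ x 0 = y 0 ∧ x 1 < y 1) : toLex x < toLex y := by
  rcases h with h0 | ⟨h0, h1⟩
  · exact ⟨0, fun j hj => absurd hj (Fin.not_lt_zero j), h0⟩
  · refine ⟨1, fun j hj => ?_, h1⟩
    rwa [show j = 0 by omega]

def rowPairs : Fin 3 → Fin 2 → Fin 4 := ![![0, 1], ![0, 2], ![0, 3]]

def colPairs : Fin 3 → Fin 2 → Fin 4 := ![![0, 1], ![0, 3], ![1, 2]]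

lemma strictMono_rowPairs (a : Fin 3) : StrictMono (rowPairs a) := by
  revert a; decide

lemma strictMono_colPairs (a : Fin 3) : StrictMono (colPairs a) := by
  revert a; decide

lemma strictMono_toLex_rowPairs : StrictMono (toLex ∘ rowPairs) :=
  Fin.strictMono_iff_lt_succ.2 fun i => Pi.toLex_lt_of_fin_two (by revert i; decide)

lemma strictMono_toLex_colPairs : StrictMono (toLex ∘ colPairs) :=
  Fin.strictMono_iff_lt_succ.2 fun i => Pi.toLex_lt_of_fin_two (by revert i; decide)

section SchurComplement

variable {R : Type*} [CommRing R]

noncomputable def schurCompl {ι κ l m : Type*} [Fintype κ] [DecidableEq κ] (A : Matrix ι ι R)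
    (e : κ → ι) (u : l → ι) (v : m → ι) : Matrix l m R :=
  A.submatrix u v - A.submatrix u e * (A.submatrix e e)⁻¹ * A.submatrix e v

lemma schurCompl_submatrix {ι κ l m l' m' : Type*} [Fintype κ] [DecidableEq κ]
    (A : Matrix ι ι R) (e : κ → ι) (u : l → ι) (v : m → ι) (r : l' → l) (c : m' → m) :
    (schurCompl A e u v).submatrix r c = schurCompl A e (u ∘ r) (v ∘ c) := rfl

lemma det_submatrix_sumElim {ι κ l : Type*} [Fintype κ] [DecidableEq κ] [Fintype l]
    [DecidableEq l] (A : Matrix ι ι R) (e : κ → ι) (u v : l → ι)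
    [Invertible (A.submatrix e e)] :
    (A.submatrix (Sum.elim e u) (Sum.elim e v)).det =
      (A.submatrix e e).det * (schurCompl A e u v).det := by
  have hblocks : A.submatrix (Sum.elim e u) (Sum.elim e v) =
      fromBlocks (A.submatrix e e) (A.submatrix e v) (A.submatrix u e) (A.submatrix u v) := by
    ext (i | i) (j | j) <;> rfl
  rw [hblocks, det_fromBlocks₁₁, invOf_eq_nonsing_inv]
  rfl

lemma det_submatrix_append {ι : Type*} {s l : ℕ} (A : Matrix ι ι R) (e : Fin s → ι)
    (u v : Fin l → ι) [Invertible (A.submatrix e e)] :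
    (A.submatrix (Fin.append e u) (Fin.append e v)).det =
      (A.submatrix e e).det * (schurCompl A e u v).det := by
  rw [← det_submatrix_sumElim, ← det_submatrix_equiv_self finSumFinEquiv, submatrix_submatrix]
  have hcomp (w : Fin l → ι) : Fin.append e w ∘ finSumFinEquiv = Sum.elim e w := by
    ext (i | i) <;> simp
  rw [hcomp, hcomp]

lemma det_of_det_submatrix_rowPairs_colPairs (G : Matrix (Fin 4) (Fin 4) R) :
    (of fun a b => (G.submatrix (rowPairs a) (colPairs b)).det).det =
      -(G 0 0 * G 0 1 * G.det) := by
  simp [det_succ_row_zero, Fin.sum_univ_succ, Fin.succAbove, rowPairs, colPairs]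
  ring

end SchurComplement

lemma IsTPk.entry_pos {α β : Type} [LinearOrder α] [LinearOrder β] {A : Matrix α β ℝ} {k : ℕ}
    (hA : IsTPk A k) (hk : 1 ≤ k) (i : α) (j : β) : 0 < A i j := by
  have h := hA 1 hk ![i] ![j] (Subsingleton.strictMono _) (Subsingleton.strictMono _)
  rwa [det_fin_one] at h

lemma IsTPk.det_pos {m : ℕ} {A : Matrix (Fin m) (Fin m) ℝ} (hA : IsTPk A m) : 0 < A.det := by
  simpa using hA m le_rfl id id strictMono_id strictMono_id

lemma IsTPk.schurCompl {ι : Type} [LinearOrder ι] {A : Matrix ι ι ℝ} {s m : ℕ}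
    (hA : IsTPk A (s + m)) {e : Fin s → ι} {w : Fin m → ι} (he : StrictMono e)
    (hw : StrictMono w) (hew : ∀ i j, e i < w j) : IsTPk (schurCompl A e w w) m := by
  intro l hl r c hr hc
  have hE : 0 < (A.submatrix e e).det := hA s (by omega) e e he he
  let := invertibleOfIsUnitDet _ hE.ne'.isUnit
  have hminor := hA (s + l) (by omega) (Fin.append e (w ∘ r)) (Fin.append e (w ∘ c))
    (Fin.strictMono_append he (hw.comp hr) fun i j => hew i _)
    (Fin.strictMono_append he (hw.comp hc) fun i j => hew i _)
  rw [det_submatrix_append, ← schurCompl_submatrix] at hminor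
  exact pos_of_mul_pos_right hminor hE.le

theorem not_isTPk_three_compound_of_isTPk {s n : ℕ} (hs : s + 4 ≤ n)
    {A : Matrix (Fin n) (Fin n) ℝ} (hA : IsTPk A (s + 4)) :
    ¬ IsTPk (compound A (s + 2)) 3 := by
  intro hC
  let e : Fin s → Fin n := Fin.castLE hs ∘ Fin.castAdd 4
  let w : Fin 4 → Fin n := Fin.castLE hs ∘ Fin.natAdd s
  have he : StrictMono e := (Fin.strictMono_castLE hs).comp (Fin.strictMono_castAdd 4)
  have hw : StrictMono w := (Fin.strictMono_castLE hs).comp (Fin.strictMono_natAdd s)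
  have hew (i : Fin s) (j : Fin 4) : e i < w j := by
    simp only [e, w, Function.comp_apply, Fin.lt_def, Fin.val_castLE, Fin.val_castAdd,
      Fin.val_natAdd]
    omega
  have hE : 0 < (A.submatrix e e).det := hA s (by omega) e e he he
  let := invertibleOfIsUnitDet _ hE.ne'.isUnit
  set G := schurCompl A e w w
  have hG : IsTPk G 4 := hA.schurCompl he hw hew
  let pick (p : Fin 3 → Fin 2 → Fin 4) (hp : ∀ a, StrictMono (p a)) (a : Fin 3) :
      STuple n (s + 2) :=
    ⟨Fin.append e (w ∘ p a), Fin.strictMono_append he (hw.comp (hp a)) fun i j => hew i _⟩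
  let rows := pick rowPairs strictMono_rowPairs
  let cols := pick colPairs strictMono_colPairs
  have hminor : (compound A (s + 2)).submatrix rows cols =
      (A.submatrix e e).det • of fun a b => (G.submatrix (rowPairs a) (colPairs b)).det := by
    ext a b
    exact det_submatrix_append A e _ _
  have hpos := hC 3 le_rfl rows cols
    (fun a b hab => Pi.toLex_append_lt_append e
      (Pi.toLex_comp_lt_comp hw (strictMono_toLex_rowPairs hab)))
    (fun a b hab => Pi.toLex_append_lt_append e
      (Pi.toLex_comp_lt_comp hw (strictMono_toLex_colPairs hab)))
  rw [hminor, det_smul, det_of_det_submatrix_rowPairs_colPairs, Fintype.card_fin, mul_neg]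
    at hpos
  have hG3 : 0 < G 0 0 * G 0 1 * G.det :=
    mul_pos (mul_pos (hG.entry_pos (by norm_num) 0 0) (hG.entry_pos (by norm_num) 0 1))
      hG.det_pos
  linarith [mul_pos (pow_pos hE 3) hG3]

theorem not_TPkplus2_of_compound_TP3_general {n k : ℕ} (hk2 : 2 ≤ k)
    (hkn : k ≤ n - 2) (A : Matrix (Fin n) (Fin n) ℝ)
    (hC : IsTPk (compound A k) 3) : ¬ IsTPk A (k + 2) := by
  obtain ⟨s, rfl⟩ : ∃ s, k = s + 2 := ⟨k - 2, by omega⟩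
  exact fun hA => not_isTPk_three_compound_of_isTPk (by omega) hA hC

/-- **Corollary.** Let `n ≥ 4` and `2 ≤ k ≤ n-2`. If the `k`-th compound
`C_k(A)` is `TP₃`, then `A` is not `TP_{k+2}`. -/
theorem not_TPkplus2_of_compound_TP3 {n k : ℕ} (hn : 4 ≤ n) (hk2 : 2 ≤ k)
    (hkn : k ≤ n - 2) (A : Matrix (Fin n) (Fin n) ℝ)
    (hC : IsTPk (compound A k) 3) : ¬ IsTPk A (k + 2) :=
  not_TPkplus2_of_compound_TP3_general hk2 hkn A hC
end

section
/- Theorem B(1): If an n-by-n real matrix A is TP_{k+2} for some k ≥ 1, then D_k(A) is TP_2. -/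
open Matrix

open Matrix

/-! The entries of `D_k(A)` are minors of `A`, hence positive. For a matrix `P` with positive entries,
`P i j' * P i' j < P i j * P i' j'` for all `i < i'`, `j < j'` says that the ratios
`P i' j / P i j` increase in `j`, so it suffices to check it for consecutive rows and columns.
For consecutive indices the four entries of `D_k(A)` involved are the corner minors of order
`k + 1` of one contiguous `(k + 2)`-block `M` of `A`, and the Desnanot–Jacobi identity turns
the `2 × 2` minor into `det M * det M°`, with `M°` the interior of `M`: a product of two
positive minors of `A`. -/

theorem det_mul_det_toBlocks₂₂_adjugate {R ι κ : Type*} [CommRing R] [Fintype ι] [Fintype κ]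
    [DecidableEq ι] [DecidableEq κ] (N : Matrix (ι ⊕ κ) (ι ⊕ κ) R) :
    N.det * N.adjugate.toBlocks₂₂.det = N.det ^ Fintype.card κ * N.toBlocks₁₁.det := by
  have hadj : fromBlocks N.toBlocks₁₁ N.toBlocks₁₂ N.toBlocks₂₁ N.toBlocks₂₂ *
      fromBlocks N.adjugate.toBlocks₁₁ N.adjugate.toBlocks₁₂ N.adjugate.toBlocks₂₁
        N.adjugate.toBlocks₂₂ = fromBlocks (N.det • 1) 0 0 (N.det • 1) := by
    rw [fromBlocks_toBlocks, fromBlocks_toBlocks, mul_adjugate, ← fromBlocks_one,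
      fromBlocks_smul]
    simp only [smul_zero]
  rw [fromBlocks_multiply, fromBlocks_inj] at hadj
  obtain ⟨-, h₁₂, -, h₂₂⟩ := hadj
  -- Replacing the `ι`-columns of `adjugate N` by those of the identity keeps its `κ`-columns,
  -- on which `N * adjugate N = det N • 1`.
  have hNC : N * fromBlocks 1 N.adjugate.toBlocks₁₂ 0 N.adjugate.toBlocks₂₂ =
      fromBlocks N.toBlocks₁₁ 0 N.toBlocks₂₁ (N.det • 1) := by
    nth_rw 1 [← fromBlocks_toBlocks N]
    rw [fromBlocks_multiply, h₁₂, h₂₂]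
    simp
  have := congrArg det hNC
  rw [det_mul, det_fromBlocks_zero₂₁, det_fromBlocks_zero₁₂, det_one, det_smul, det_one] at this
  linear_combination this

theorem desnanot_jacobi {R : Type*} [CommRing R] [IsDomain R] {s : ℕ}
    (M : Matrix (Fin (s + 2)) (Fin (s + 2)) R) (hM : M.det ≠ 0) :
    M.det * (M.submatrix (fun p : Fin s => p.succ.castSucc) fun p => p.succ.castSucc).det =
      (M.submatrix Fin.castSucc Fin.castSucc).det * (M.submatrix Fin.succ Fin.succ).det -
        (M.submatrix Fin.castSucc Fin.succ).det * (M.submatrix Fin.succ Fin.castSucc).det := by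
  -- `e` lists the interior indices first, then the corners `last` and `0`.
  let e : Fin s ⊕ Fin 2 ≃ Fin (s + 2) := finSumFinEquiv.trans (finRotate _)
  have e_inl (q : Fin s) : e (.inl q) = q.succ.castSucc := by
    ext; simp [e, Fin.val_add]
  have e_inr_zero : e (.inr 0) = Fin.last (s + 1) := by
    ext; simp [e, Fin.val_add]
  have e_inr_one : e (.inr 1) = 0 := by
    ext; simp [e, Fin.val_add]
  have h := det_mul_det_toBlocks₂₂_adjugate (M.submatrix e e)
  rw [det_submatrix_equiv_self, adjugate_submatrix_equiv_self, Fintype.card_fin, sq,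
    mul_assoc] at h
  replace h := mul_left_cancel₀ hM h
  have hsign : (-1 : R) ^ (s + 1) * (-1) ^ (s + 1) = 1 := by
    rw [← pow_add, Even.neg_one_pow ⟨_, rfl⟩]
  simp only [det_fin_two, toBlocks₂₂, toBlocks₁₁, of_apply, submatrix_apply, e_inl, e_inr_zero,
    e_inr_one, adjugate_fin_succ_eq_det_submatrix, Fin.succAbove_zero, Fin.succAbove_last,
    Fin.val_zero, Fin.val_last, zero_add, add_zero, pow_zero, one_mul,
    Even.neg_one_pow (⟨s + 1, rfl⟩ : Even (s + 1 + (s + 1)))] at h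
  change _ * (of fun i j : Fin s => M i.succ.castSucc j.succ.castSucc).det = _
  linear_combination -h - (M.submatrix Fin.castSucc Fin.succ).det *
    (M.submatrix Fin.succ Fin.castSucc).det * hsign

theorem Fin.val_orderSucc_of_not_isMax {N : ℕ} {i : Fin N} (hi : ¬IsMax i) :
    ((Order.succ i : Fin N) : ℕ) = i + 1 :=
  (Nat.covBy_iff_add_one_eq.1 (Fin.covBy_iff.1 (Order.covBy_succ_of_not_isMax hi))).symm

theorem offDiag_mul_lt_diag_mul_of_succ {α β : Type*} [LinearOrder α] [SuccOrder α]
    [IsSuccArchimedean α] [LinearOrder β] [SuccOrder β] [IsSuccArchimedean β]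
    (P : Matrix α β ℝ) (hpos : ∀ i j, 0 < P i j)
    (hsucc : ∀ i j, ¬IsMax i → ¬IsMax j →
      P i (Order.succ j) * P (Order.succ i) j < P i j * P (Order.succ i) (Order.succ j))
    {i i' : α} {j j' : β} (hi : i < i') (hj : j < j') :
    P i j' * P i' j < P i j * P i' j' := by
  have hrows (a : α) (ha : ¬IsMax a) : StrictMono fun b => P (Order.succ a) b / P a b :=
    strictMono_of_lt_succ fun b hb => by
      rw [div_lt_div_iff₀ (hpos _ _) (hpos _ _)]
      linarith [hsucc a b ha hb]
  have hcols : StrictMono fun a => P a j' / P a j :=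
    strictMono_of_lt_succ fun a ha => by
      have := hrows a ha hj
      rw [div_lt_div_iff₀ (hpos _ _) (hpos _ _)] at this ⊢
      linarith
  have := hcols hi
  rw [div_lt_div_iff₀ (hpos _ _) (hpos _ _)] at this
  linarith

theorem isTPk_two_of_pos_of_offDiag_mul_lt {α β : Type} [LinearOrder α] [LinearOrder β]
    (P : Matrix α β ℝ) (hpos : ∀ i j, 0 < P i j)
    (hminor : ∀ ⦃i i' j j'⦄, i < i' → j < j' → P i j' * P i' j < P i j * P i' j') :
    IsTPk P 2 := by
  intro l hl r c hr hc
  interval_cases l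
  · simp
  · simpa using hpos _ _
  · have := hminor (hr Fin.zero_lt_one) (hc Fin.zero_lt_one)
    rw [det_fin_two]
    simp only [submatrix_apply]
    linarith

theorem strictMono_window {n : ℕ} (i sz : ℕ) (h : i + sz ≤ n) :
    StrictMono fun p : Fin sz => (⟨i + p, by omega⟩ : Fin n) :=
  fun _ _ hpq => Fin.mk_lt_mk.2 (Nat.add_lt_add_left hpq i)

theorem IsTPk.cminor_pos {n m : ℕ} {A : Matrix (Fin n) (Fin n) ℝ} (hA : IsTPk A m)
    {sz i j : ℕ} (hsz : sz ≤ m) (hi : i + sz ≤ n) (hj : j + sz ≤ n) :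
    0 < cminor A sz i j hi hj :=
  hA sz hsz _ _ (strictMono_window i sz hi) (strictMono_window j sz hj)

theorem cminor_desnanot_jacobi {n s i j : ℕ} (A : Matrix (Fin n) (Fin n) ℝ)
    (hi : i + (s + 2) ≤ n) (hj : j + (s + 2) ≤ n) (hA : cminor A (s + 2) i j hi hj ≠ 0) :
    cminor A (s + 2) i j hi hj * cminor A s (i + 1) (j + 1) (by omega) (by omega) =
      cminor A (s + 1) i j (by omega) (by omega) *
          cminor A (s + 1) (i + 1) (j + 1) (by omega) (by omega) -
        cminor A (s + 1) i (j + 1) (by omega) (by omega) *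
          cminor A (s + 1) (i + 1) j (by omega) (by omega) := by
  have := desnanot_jacobi _ hA
  simp only [submatrix_submatrix] at this
  convert this using 3 <;> unfold cminor <;> congr 2 <;> funext p <;> ext <;>
    simp only [Function.comp_apply, Fin.val_succ, Fin.val_castSucc] <;> omega

theorem Dmat_eq_cminor {n k : ℕ} (A : Matrix (Fin n) (Fin n) ℝ) (i j : Fin (n - k)) {a b : ℕ}
    (ha : (i : ℕ) = a) (hb : (j : ℕ) = b) :
    Dmat A k i j = cminor A (k + 1) a b (by omega) (by omega) := by
  subst ha hb
  rfl

theorem Dmat_pos {n k m : ℕ} {A : Matrix (Fin n) (Fin n) ℝ} (hA : IsTPk A m) (hk : k + 1 ≤ m)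
    (i j : Fin (n - k)) : 0 < Dmat A k i j :=
  hA.cminor_pos hk (by have := i.isLt; omega) (by have := j.isLt; omega)

theorem Dmat_offDiag_mul_lt_diag_mul_succ {n k : ℕ} {A : Matrix (Fin n) (Fin n) ℝ}
    (hA : IsTPk A (k + 2)) (i j : Fin (n - k)) (hi : ¬IsMax i) (hj : ¬IsMax j) :
    Dmat A k i (Order.succ j) * Dmat A k (Order.succ i) j <
      Dmat A k i j * Dmat A k (Order.succ i) (Order.succ j) := by
  have hi' := Fin.val_orderSucc_of_not_isMax hi
  have hj' := Fin.val_orderSucc_of_not_isMax hj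
  have hin : (i : ℕ) + (k + 2) ≤ n := by have := (Order.succ i).isLt; omega
  have hjn : (j : ℕ) + (k + 2) ≤ n := by have := (Order.succ j).isLt; omega
  rw [Dmat_eq_cminor A i j rfl rfl, Dmat_eq_cminor A i _ rfl hj', Dmat_eq_cminor A _ j hi' rfl,
    Dmat_eq_cminor A _ _ hi' hj']
  have hDJ := cminor_desnanot_jacobi A hin hjn (hA.cminor_pos le_rfl hin hjn).ne'
  have hinterior := hA.cminor_pos (sz := k) (i := i + 1) (j := j + 1) (by omega) (by omega)
    (by omega)
  linarith [mul_pos (hA.cminor_pos le_rfl hin hjn) hinterior]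

theorem Dmat_TP2_general {n k : ℕ} (A : Matrix (Fin n) (Fin n) ℝ)
    (hA : IsTPk A (k + 2)) : IsTPk (Dmat A k) 2 :=
  isTPk_two_of_pos_of_offDiag_mul_lt _ (Dmat_pos hA (by omega)) fun _ _ _ _ hi hj =>
    offDiag_mul_lt_diag_mul_of_succ _ (Dmat_pos hA (by omega))
      (Dmat_offDiag_mul_lt_diag_mul_succ hA) hi hj

/-- **Theorem B(1).** If `A` is `TP_{k+2}` for some `k ≥ 1`, then `D_k(A)` is `TP₂`. -/
theorem Dmat_TP2 {n k : ℕ} (hk : 1 ≤ k) (A : Matrix (Fin n) (Fin n) ℝ)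
    (hA : IsTPk A (k + 2)) : IsTPk (Dmat A k) 2 :=
  Dmat_TP2_general A hA
end
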